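/- Let A_1 and A_2 be positive definite real symmetric n×n matrices. Then for every real symmetric n×n matrix B one has tr(B A_1^{1/2} B A_1^{1/2}) + tr(B A_2^{1/2} B A_2^{1/2}) ≤ tr(B (A_1 + A_2)^{1/2} B (A_1 + A_2)^{1/2}). Equivalently, P(A_1^{1/2}) + P(A_2^{1/2}) ⪯ P((A_1+A_2)^{1/2}) as linear operators on symmetric matrices. (Lemma 2 of the paper, specialized to the positive semidefinite cone.) -/

import Mathlib

open Matrix BigOperators

/- `msqrt A` is the positive semidefinite square root of `A` (junk value `0` when `A` is
not positive semidefinite). -/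
open Classical in
noncomputable def msqrt {n : ℕ} (A : Matrix (Fin n) (Fin n) ℝ) : Matrix (Fin n) (Fin n) ℝ :=
  if h : A.PosSemidef then
    h.1.eigenvectorUnitary.1 * diagonal ((RCLike.ofReal (K := ℝ)) ∘ Real.sqrt ∘ h.1.eigenvalues) *
      (star h.1.eigenvectorUnitary : Matrix (Fin n) (Fin n) ℝ) else 0

/- The matrix geometric mean `X # Y = X^{1/2} (X^{-1/2} Y X^{-1/2})^{1/2} X^{1/2}`. -/
noncomputable def gmean {n : ℕ} (X Y : Matrix (Fin n) (Fin n) ℝ) : Matrix (Fin n) (Fin n) ℝ :=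
  msqrt X * msqrt (msqrt X⁻¹ * Y * msqrt X⁻¹) * msqrt X

/-
Under `B ↦ vec B`, the map `B ↦ M B M` becomes `M ⊗ₖ M`, so it suffices to show
`∑ₖ Mₖ ⊗ₖ Mₖ ≤ S ⊗ₖ S` whenever `∑ₖ Mₖ² = S²`. Each `Mₖ ⊗ₖ Mₖ` is the off-diagonal block of
the Gram matrix of `Mₖ ⊗ₖ 1` and `1 ⊗ₖ Mₖ`, so summing over `k` shows that
`[[S² ⊗ₖ 1, X], [X, 1 ⊗ₖ S²]]` is positive semidefinite for `X = ∑ₖ Mₖ ⊗ₖ Mₖ`. Its corner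
`1 ⊗ₖ S²` equals `G (S² ⊗ₖ 1)⁻¹ G` for `G = S ⊗ₖ S`, and this forces `X ≤ G`, i.e. every
eigenvalue `μ` of `G^{-1/2} X G^{-1/2}` is at most `1`: writing it as `X x = μ G x` with `x ≠ 0`,
testing the block form at `(-μ (S² ⊗ₖ 1)⁻¹ G x, x)` gives `(1 - μ²) ⟪x, (1 ⊗ₖ S²) x⟫ ≥ 0`.
-/

open scoped MatrixOrder Kronecker

theorem msqrt_eq_cfcSqrt {n : ℕ} {A : Matrix (Fin n) (Fin n) ℝ} (hA : A.PosSemidef) :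
    msqrt A = CFC.sqrt A := by
  rw [CFC.sqrt_eq_real_sqrt A hA.nonneg, cfcₙ_eq_cfc, hA.1.cfc_eq, msqrt, dif_pos hA]
  rfl

namespace Matrix

variable {ι : Type*} [Fintype ι]

theorem IsHermitian.dotProduct_mulVec_comm {X : Matrix ι ι ℝ} (hX : X.IsHermitian)
    (u w : ι → ℝ) : u ⬝ᵥ X *ᵥ w = w ⬝ᵥ X *ᵥ u := by
  rw [dotProduct_mulVec, ← mulVec_transpose, show Xᵀ = X from hX, dotProduct_comm]

theorem mulVec_add_mulVec_dotProduct_self {κ : Type*} [Fintype κ] (P Q : Matrix κ ι ℝ)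
    (u w : ι → ℝ) :
    (P *ᵥ u + Q *ᵥ w) ⬝ᵥ (P *ᵥ u + Q *ᵥ w) =
      u ⬝ᵥ (Pᵀ * P) *ᵥ u + 2 * (u ⬝ᵥ (Pᵀ * Q) *ᵥ w) + w ⬝ᵥ (Qᵀ * Q) *ᵥ w := by
  simp only [← mulVec_mulVec, dotProduct_mulVec _ Pᵀ, dotProduct_mulVec _ Qᵀ, vecMul_transpose,
    add_dotProduct, dotProduct_add, dotProduct_comm (Q *ᵥ w) (P *ᵥ u)]
  ring

variable [DecidableEq ι]

theorem le_one_of_mulVec_eq_smul_mulVec {A G X : Matrix ι ι ℝ} (hA : A.PosDef) (hG : G.PosDef)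
    (h : ∀ u w : ι → ℝ, 0 ≤ u ⬝ᵥ A *ᵥ u + 2 * (u ⬝ᵥ X *ᵥ w) + w ⬝ᵥ (G * A⁻¹ * G) *ᵥ w)
    {μ : ℝ} {x : ι → ℝ} (hx : x ≠ 0) (hXx : X *ᵥ x = μ • G *ᵥ x) : μ ≤ 1 := by
  set y := A⁻¹ *ᵥ G *ᵥ x
  have hAy : A *ᵥ y = G *ᵥ x := by
    rw [mulVec_mulVec, mul_nonsing_inv _ ((isUnit_iff_isUnit_det A).mp hA.isUnit), one_mulVec]
  have hGx : G *ᵥ x ≠ 0 :=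
    (mulVec_injective_iff_isUnit.mpr hG.isUnit).ne_iff' (mulVec_zero G) |>.2 hx
  have hq : 0 < y ⬝ᵥ G *ᵥ x := by
    simpa [y, dotProduct_comm] using hA.inv.dotProduct_mulVec_pos hGx
  have hquad := h (-μ • y) x
  have hB : x ⬝ᵥ (G * A⁻¹ * G) *ᵥ x = y ⬝ᵥ G *ᵥ x := by
    rw [← mulVec_mulVec, ← mulVec_mulVec, hG.isHermitian.dotProduct_mulVec_comm, dotProduct_comm]
  rw [hB, hXx, mulVec_smul, hAy] at hquad
  simp only [smul_dotProduct, dotProduct_smul, smul_eq_mul] at hquad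
  have hμ2 : 0 ≤ (1 - μ ^ 2) * (y ⬝ᵥ G *ᵥ x) := by linarith
  nlinarith [(mul_nonneg_iff_of_pos_right hq).mp hμ2]

theorem le_of_forall_quadratic_nonneg {A G X : Matrix ι ι ℝ} (hA : A.PosDef) (hG : G.PosDef)
    (hX : X.IsHermitian)
    (h : ∀ u w : ι → ℝ, 0 ≤ u ⬝ᵥ A *ᵥ u + 2 * (u ⬝ᵥ X *ᵥ w) + w ⬝ᵥ (G * A⁻¹ * G) *ᵥ w) :
    X ≤ G := by
  set R := CFC.sqrt G
  have hR : R.PosDef := hG.isStrictlyPositive.sqrt.posDef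
  have hRR : R * R = G := CFC.sqrt_mul_sqrt_self G hG.posSemidef.nonneg
  have hRinv : R * R⁻¹ = 1 := mul_nonsing_inv _ ((isUnit_iff_isUnit_det R).mp hR.isUnit)
  have hinvR : R⁻¹ * R = 1 := nonsing_inv_mul _ ((isUnit_iff_isUnit_det R).mp hR.isUnit)
  set Y := R⁻¹ * X * R⁻¹
  have hRYR : R * Y * R = X := by
    simp only [Y, ← mul_assoc, hRinv, one_mul]
    rw [mul_assoc, hinvR, mul_one]
  have hY : Y.IsHermitian := by
    have := isHermitian_conjTranspose_mul_mul R⁻¹ hX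
    rwa [hR.isHermitian.inv.eq] at this
  suffices Y ≤ 1 by
    have hconj := (le_iff.mp this).conjTranspose_mul_mul_same R
    rwa [hR.isHermitian.eq, mul_sub, sub_mul, mul_one, hRR, hRYR] at hconj
  rw [CFC.le_one_iff (R := ℝ) Y hY.isSelfAdjoint]
  intro μ hμ
  rw [← spectrum_toLin', ← Module.End.hasEigenvalue_iff_mem_spectrum] at hμ
  obtain ⟨v, hv⟩ := hμ.exists_hasEigenvector
  have hYv : Y *ᵥ v = μ • v := by simpa using hv.apply_eq_smul
  refine le_one_of_mulVec_eq_smul_mulVec hA hG h (x := R⁻¹ *ᵥ v) ?_ ?_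
  · exact (mulVec_injective_iff_isUnit.mpr hR.inv.isUnit).ne_iff' (mulVec_zero _) |>.2 hv.2
  · calc X *ᵥ R⁻¹ *ᵥ v = R *ᵥ Y *ᵥ v := by
          rw [← hRYR, mulVec_mulVec, mulVec_mulVec, mul_assoc (R * Y), hRinv, mul_one]
      _ = μ • G *ᵥ R⁻¹ *ᵥ v := by
          rw [hYv, mulVec_smul, ← hRR, mulVec_mulVec, mul_assoc, hRinv, mul_one]

theorem quadratic_kronecker_nonneg {M : Matrix ι ι ℝ} (hM : M.IsHermitian) (u w : ι × ι → ℝ) :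
    0 ≤ u ⬝ᵥ ((M * M) ⊗ₖ 1) *ᵥ u + 2 * (u ⬝ᵥ (M ⊗ₖ M) *ᵥ w) + w ⬝ᵥ (1 ⊗ₖ (M * M)) *ᵥ w := by
  have hsq := mulVec_add_mulVec_dotProduct_self (M ⊗ₖ 1) (1 ⊗ₖ M) u w
  simp only [← kroneckerMap_transpose, transpose_one, show Mᵀ = M from hM,
    ← mul_kronecker_mul, mul_one, one_mul] at hsq
  exact hsq ▸ dotProduct_star_self_nonneg _

theorem sum_kronecker_self_le {κ : Type*} [Fintype κ] {S : Matrix ι ι ℝ} (hS : S.PosDef)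
    {M : κ → Matrix ι ι ℝ} (hM : ∀ k, (M k).IsHermitian) (hsum : ∑ k, M k * M k = S * S) :
    ∑ k, M k ⊗ₖ M k ≤ S ⊗ₖ S := by
  have hSS : (S * S).PosDef := by
    simpa [sq] using (hS.posSemidef.pow 2).posDef_iff_isUnit.mpr (hS.isUnit.pow 2)
  have hS1 : S * S⁻¹ = 1 := mul_nonsing_inv _ ((isUnit_iff_isUnit_det S).mp hS.isUnit)
  have hS2 : S⁻¹ * S = 1 := nonsing_inv_mul _ ((isUnit_iff_isUnit_det S).mp hS.isUnit)
  have hG : (S ⊗ₖ S) * ((S * S) ⊗ₖ 1)⁻¹ * (S ⊗ₖ S) = 1 ⊗ₖ (S * S) := by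
    rw [inv_kronecker, inv_one, ← mul_kronecker_mul, ← mul_kronecker_mul, mul_inv_rev,
      ← mul_assoc, hS1, one_mul, hS2, mul_one]
  have hX : (∑ k, M k ⊗ₖ M k).IsHermitian := by
    simp only [IsHermitian, conjTranspose_sum, conjTranspose_kronecker, fun k => (hM k).eq]
  refine le_of_forall_quadratic_nonneg (hSS.kronecker PosDef.one) (hS.kronecker hS) hX
    fun u w => ?_
  have hdistrib : (∑ k, M k * M k) ⊗ₖ (1 : Matrix ι ι ℝ) = ∑ k, (M k * M k) ⊗ₖ 1 := by
    ext; simp only [kroneckerMap_apply, sum_apply, Finset.sum_mul]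
  have hdistrib' : (1 : Matrix ι ι ℝ) ⊗ₖ (∑ k, M k * M k) = ∑ k, 1 ⊗ₖ (M k * M k) := by
    ext; simp only [kroneckerMap_apply, sum_apply, Finset.mul_sum]
  rw [hG, ← hsum, hdistrib, hdistrib']
  simp only [sum_mulVec, dotProduct_sum, Finset.mul_sum, ← Finset.sum_add_distrib]
  exact Finset.sum_nonneg fun k _ => quadratic_kronecker_nonneg (hM k) u w

theorem sum_trace_transpose_mul_mul_mul_le {κ : Type*} [Fintype κ] {S : Matrix ι ι ℝ}
    (hS : S.PosDef) {M : κ → Matrix ι ι ℝ} (hM : ∀ k, (M k).IsHermitian)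
    (hsum : ∑ k, M k * M k = S * S) (B : Matrix ι ι ℝ) :
    ∑ k, (Bᵀ * M k * B * M k).trace ≤ (Bᵀ * S * B * S).trace := by
  have hvec : ∀ N : Matrix ι ι ℝ, N.IsHermitian →
      vec B ⬝ᵥ (N ⊗ₖ N) *ᵥ vec B = (Bᵀ * N * B * N).trace := fun N hN => by
    rw [kronecker_mulVec_vec, vec_dotProduct_vec, show Nᵀ = N from hN]
    simp only [mul_assoc]
  have h := (sum_kronecker_self_le hS hM hsum).dotProduct_mulVec_nonneg (vec B)
  simp only [star_trivial, sub_mulVec, dotProduct_sub, sum_mulVec, dotProduct_sum,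
    hvec S hS.isHermitian, hvec _ (hM _)] at h
  exact sub_nonneg.mp h

end Matrix

theorem stmt2 {n : ℕ} (A₁ A₂ : Matrix (Fin n) (Fin n) ℝ)
    (hA₁ : A₁.PosDef) (hA₂ : A₂.PosDef) :
    ∀ B : Matrix (Fin n) (Fin n) ℝ, B.IsHermitian →
      Matrix.trace (B * msqrt A₁ * B * msqrt A₁) + Matrix.trace (B * msqrt A₂ * B * msqrt A₂)
        ≤ Matrix.trace (B * msqrt (A₁ + A₂) * B * msqrt (A₁ + A₂)) := by
  intro B hB
  have hA := hA₁.add hA₂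
  rw [msqrt_eq_cfcSqrt hA₁.posSemidef, msqrt_eq_cfcSqrt hA₂.posSemidef,
    msqrt_eq_cfcSqrt hA.posSemidef]
  have hM : ∀ k, (![CFC.sqrt A₁, CFC.sqrt A₂] k).IsHermitian := fun k => by
    fin_cases k <;> exact (CFC.sqrt_nonneg _).posSemidef.isHermitian
  have hsum : ∑ k, ![CFC.sqrt A₁, CFC.sqrt A₂] k * ![CFC.sqrt A₁, CFC.sqrt A₂] k =
      CFC.sqrt (A₁ + A₂) * CFC.sqrt (A₁ + A₂) := by
    simp only [Fin.sum_univ_two, cons_val_zero, cons_val_one,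
      CFC.sqrt_mul_sqrt_self _ hA₁.posSemidef.nonneg,
      CFC.sqrt_mul_sqrt_self _ hA₂.posSemidef.nonneg,
      CFC.sqrt_mul_sqrt_self _ hA.posSemidef.nonneg]
  simpa only [Fin.sum_univ_two, cons_val_zero, cons_val_one, show Bᵀ = B from hB] using
    sum_trace_transpose_mul_mul_mul_le hA.isStrictlyPositive.sqrt.posDef hM hsum B
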